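/- arXiv:2510.21231 — 5 statements merged into one kernel-verified Lean document; each statement's English description precedes it below -/
import Mathlib

section
/- For every r ∈ (1,∞) and q̄ ∈ [0,1), the expected revenue of the r-markup mechanism on two values drawn i.i.d. from the normalized triangle distribution T_{q̄} equals G(q̄, r) := (2r / ((1−q̄)(r−1))) · ( (1−q̄)/(1−q̄+q̄r) + ln( r/(1−q̄+q̄r) ) / (1−r) ). In particular, the integral identity 2r · ∫_{q̄r/(1−q̄+q̄r)}^{1} (1−q)/( (1−q̄)·(r − qr + q) ) dq = G(q̄, r) holds. -/
open MeasureTheory Set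

noncomputable section

/-- A two-agent direct mechanism: allocation rule `x` and payment rule `p`. -/
structure TwoMech where
  x : (Fin 2 → ℝ) → Fin 2 → ℝ
  p : (Fin 2 → ℝ) → Fin 2 → ℝ

namespace TwoMech

/-- Feasibility: nonnegative allocations summing to at most one. -/
def Feasible (M : TwoMech) : Prop :=
  ∀ v : Fin 2 → ℝ, (∀ i, 0 ≤ v i) →
    (∀ i, 0 ≤ M.x v i) ∧ M.x v 0 + M.x v 1 ≤ 1

/-- Dominant-strategy incentive compatibility. -/
def DSIC (M : TwoMech) : Prop :=
  ∀ v : Fin 2 → ℝ, (∀ i, 0 ≤ v i) → ∀ i : Fin 2, ∀ z : ℝ, 0 ≤ z →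
    v i * M.x (Function.update v i z) i - M.p (Function.update v i z) i ≤
      v i * M.x v i - M.p v i

/-- Individual rationality. -/
def IR (M : TwoMech) : Prop :=
  ∀ v : Fin 2 → ℝ, (∀ i, 0 ≤ v i) → ∀ i : Fin 2, 0 ≤ v i * M.x v i - M.p v i

/-- A feasible, DSIC and IR mechanism. -/
def Admissible (M : TwoMech) : Prop := M.Feasible ∧ M.DSIC ∧ M.IR

/-- Scale invariance: allocations are invariant and payments scale linearly
under multiplicative rescaling of all values. -/
def ScaleInvariant (M : TwoMech) : Prop :=
  ∀ α : ℝ, 0 < α → ∀ v : Fin 2 → ℝ, (∀ i, 0 ≤ v i) → ∀ i : Fin 2,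
    M.x (fun j => α * v j) i = M.x v i ∧ M.p (fun j => α * v j) i = α * M.p v i

/-- Expected revenue of a mechanism on two i.i.d. draws from `μ`. -/
def rev (M : TwoMech) (μ : Measure ℝ) : ℝ :=
  ∫ v : ℝ × ℝ, (M.p ![v.1, v.2] 0 + M.p ![v.1, v.2] 1) ∂(μ.prod μ)

end TwoMech

/-- Optimal (Bayesian) revenue: supremum of revenue over admissible mechanisms. -/
def OPT (μ : Measure ℝ) : ℝ :=
  sSup {b : ℝ | ∃ M : TwoMech, M.Admissible ∧ M.rev μ = b}

/-- Survival function `Pr[v ≥ t]` of a distribution. -/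
def surv (μ : Measure ℝ) (t : ℝ) : ℝ := (μ {v | t ≤ v}).toReal

/-- The distribution is supported on the nonnegative reals. -/
def NonnegSupport (μ : Measure ℝ) : Prop := μ {v | v < 0} = 0

/-- `t` is in the support of `μ`. -/
def MemSupport (μ : Measure ℝ) (t : ℝ) : Prop :=
  ∀ ε > 0, 0 < μ (Set.Ioo (t - ε) (t + ε))

/-- Regularity: there is a concave function `R` on `[0,1]` with
`R (S t) = t * S t` for all `t` in the support, where `S` is the survival function. -/
def Regular (μ : Measure ℝ) : Prop :=
  ∃ R : ℝ → ℝ, ConcaveOn ℝ (Set.Icc 0 1) R ∧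
    ∀ t, MemSupport μ t → R (surv μ t) = t * surv μ t

/-- Expected revenue of the `r`-markup mechanism on two i.i.d. draws from `μ`:
the revenue is `r * min v₁ v₂` if `max v₁ v₂ ≥ r * min v₁ v₂`, and `0` otherwise.
`markupRev 1 μ` is the second-price auction revenue `E[min v₁ v₂]`. -/
def markupRev (r : ℝ) (μ : Measure ℝ) : ℝ :=
  ∫ v : ℝ × ℝ,
    (if r * min v.1 v.2 ≤ max v.1 v.2 then r * min v.1 v.2 else 0) ∂(μ.prod μ)

/-- Revenue of the stochastic markup mechanism `M_{α,r}`, running the second-price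
auction with probability `α` and the `r`-markup mechanism with probability `1-α`. -/
def mixMarkupRev (α r : ℝ) (μ : Measure ℝ) : ℝ :=
  α * markupRev 1 μ + (1 - α) * markupRev r μ

/-- Revenue of a general stochastic markup mechanism mixing the markup ratio
`r` according to the distribution `ν`. -/
def stochMarkupRev (ν : Measure ℝ) (μ : Measure ℝ) : ℝ :=
  ∫ r, markupRev r μ ∂ν

/-- The normalized triangle distribution `T_q`, with survival function
`1 / (1 + t(1-q))` on `[0, 1/q]` (point mass `q` at `1/q`); for `q = 0` it has
survival function `1/(1+t)` on `[0, ∞)`. -/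
def triangle (q : ℝ) : Measure ℝ :=
  volume.withDensity
    (fun t => ENNReal.ofReal
      (if 0 ≤ t ∧ q * t < 1 then (1 - q) / (1 + t * (1 - q)) ^ 2 else 0))
  + (ENNReal.ofReal q) • Measure.dirac (1 / q)

/-- The normalized quadrilateral distribution `Q_{q,q',r}`, with survival function
`q' / (q' + t r q (1-q'))` for `t < 1/(rq)`,
`q' q (r-1) / (t r q (q'-q) + (r q - q'))` for `1/(rq) ≤ t ≤ 1/q`,
and `0` for `t > 1/q` (point mass `q` at `1/q`). -/
def quadri (q q' r : ℝ) : Measure ℝ :=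
  volume.withDensity
    (fun t => ENNReal.ofReal
      (if 0 ≤ t ∧ t * (r * q) < 1 then
        q' * (r * q) * (1 - q') / (q' + t * (r * q) * (1 - q')) ^ 2
      else if 1 ≤ t * (r * q) ∧ t * q < 1 then
        (q' * q * (r - 1)) * ((r * q) * (q' - q)) /
          ((r * q) * (q' - q) * t + (r * q - q')) ^ 2
      else 0))
  + (ENNReal.ofReal q) • Measure.dirac (1 / q)

/-- `G q r`: closed form for the expected revenue of the `r`-markup mechanism on
two i.i.d. draws from the normalized triangle distribution `T_q`. -/
def G (q r : ℝ) : ℝ :=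
  (2 * r / ((1 - q) * (r - 1))) *
    ((1 - q) / (1 - q + q * r) + Real.log (r / (1 - q + q * r)) / (1 - r))

/-!
For `r > 1` the `r`-markup mechanism collects `r v₁` exactly when `v₂ ≥ r v₁` (or symmetrically),
so its revenue is `2 ∫ r t S(r t) dF(t)` with `S` the survival function. For `T_q̄`,
`S(t) = 1/(1 + t(1 - q̄))` as long as `q̄ t ≤ 1`, and the atom at `1/q̄` contributes nothing
because `S(r/q̄) = 0`. In the quantile `s = S(t)` one has
`t S(r t) = (1 - s)/((1 - q̄)(r - s r + s))`, so the revenue is `2r` times the integral of this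
function over `[S(1/(q̄ r)), 1] = [q̄ r/(1 - q̄ + q̄ r), 1]`. Up to the factor `(1 - q̄)(r - 1)²`,
a primitive is `log(r - s(r - 1)) - (r - s(r - 1))`; composed with `S` it is also a primitive in
the value `t`, which performs the substitution.
-/

open Filter Topology
open scoped ENNReal

lemma lintegral_Ioi_ofReal_of_hasDerivAt {F f : ℝ → ℝ} {s L : ℝ}
    (hderiv : ∀ x ∈ Ici s, HasDerivAt F (f x) x) (hf : ∀ x ∈ Ioi s, 0 ≤ f x)
    (hF : Tendsto F atTop (𝓝 L)) :
    ∫⁻ t in Ioi s, ENNReal.ofReal (f t) = ENNReal.ofReal (L - F s) := by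
  rw [← ofReal_integral_eq_lintegral_ofReal (integrableOn_Ioi_deriv_of_nonneg' hderiv hf hF)
    ((ae_restrict_iff' measurableSet_Ioi).2 (Eventually.of_forall hf)),
    integral_Ioi_of_hasDerivAt_of_nonneg' hderiv hf hF]

lemma lintegral_Ioc_ofReal_of_hasDerivAt {F f : ℝ → ℝ} {s b : ℝ} (hsb : s ≤ b)
    (hderiv : ∀ x ∈ Icc s b, HasDerivAt F (f x) x) (hf : ∀ x ∈ Ioc s b, 0 ≤ f x) :
    ∫⁻ t in Ioc s b, ENNReal.ofReal (f t) = ENNReal.ofReal (F b - F s) := by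
  have hcont : ContinuousOn F (Icc s b) := fun x hx =>
    (hderiv x hx).continuousAt.continuousWithinAt
  have hderiv' : ∀ x ∈ Ioo s b, HasDerivAt F (f x) x := fun x hx =>
    hderiv x (Ioo_subset_Icc_self hx)
  have hint := intervalIntegral.integrableOn_deriv_of_nonneg hcont hderiv'
    fun x hx => hf x (Ioo_subset_Ioc_self hx)
  rw [← intervalIntegral.integral_eq_sub_of_hasDerivAt_of_le hsb hcont hderiv'
      ((intervalIntegrable_iff_integrableOn_Ioc_of_le hsb).2 hint),
    intervalIntegral.integral_of_le hsb, ofReal_integral_eq_lintegral_ofReal hint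
      ((ae_restrict_iff' measurableSet_Ioc).2 (Eventually.of_forall hf))]

lemma lintegral_Ioi_ofReal_ite_mul_le_one {F f : ℝ → ℝ} {c s L : ℝ} (hc : 0 ≤ c)
    (hcs : c * s ≤ 1) (hderiv : ∀ x, s ≤ x → c * x ≤ 1 → HasDerivAt F (f x) x)
    (hf : ∀ x, s < x → c * x ≤ 1 → 0 ≤ f x)
    (hlim : c = 0 → Tendsto F atTop (𝓝 L)) (hend : 0 < c → F c⁻¹ = L) :
    ∫⁻ t in Ioi s, ENNReal.ofReal (if c * t ≤ 1 then f t else 0) =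
      ENNReal.ofReal (L - F s) := by
  rcases hc.eq_or_lt with rfl | hc
  · simp only [zero_mul, zero_le_one, if_true]
    exact lintegral_Ioi_ofReal_of_hasDerivAt (fun x hx => hderiv x hx (by simp))
      (fun x hx => hf x hx (by simp)) (hlim rfl)
  · have hle : ∀ x, c * x ≤ 1 ↔ x ≤ c⁻¹ := fun x => by rw [← one_div, le_div_iff₀' hc]
    have hind : (fun t => ENNReal.ofReal (if c * t ≤ 1 then f t else 0)) =
        (Iic c⁻¹).indicator (fun t => ENNReal.ofReal (f t)) := by
      ext t
      by_cases ht : t ≤ c⁻¹ <;> simp [hle, ht]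
    simp only [hle] at hderiv hf hcs
    rw [hind, lintegral_indicator measurableSet_Iic, Measure.restrict_restrict measurableSet_Iic,
      Iic_inter_Ioi, ← hend hc]
    exact lintegral_Ioc_ofReal_of_hasDerivAt hcs (fun x hx => hderiv x hx.1 hx.2)
      (fun x hx => hf x hx.1 hx.2)

section Markup

lemma markupPayment_eq_add {r a b : ℝ} (hr : 1 < r) (ha : 0 ≤ a) (hb : 0 ≤ b) :
    (if r * min a b ≤ max a b then r * min a b else 0) =
      (if r * a ≤ b then r * a else 0) + (if r * b ≤ a then r * b else 0) := by
  rcases le_total a b with hab | hab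
  · rw [min_eq_left hab, max_eq_right hab]
    split_ifs <;> nlinarith
  · rw [min_eq_right hab, max_eq_left hab]
    split_ifs <;> nlinarith

lemma measurable_ofReal_ite_mul_le (r : ℝ) :
    Measurable fun v : ℝ × ℝ => ENNReal.ofReal (if r * v.1 ≤ v.2 then r * v.1 else 0) :=
  (Measurable.ite (measurableSet_le (by fun_prop) (by fun_prop)) (by fun_prop)
    measurable_const).ennreal_ofReal

lemma ae_nonneg_prod {μ : Measure ℝ} (hμ : ∀ᵐ x ∂μ, 0 ≤ x) :
    ∀ᵐ v ∂(μ.prod μ), 0 ≤ v.1 ∧ 0 ≤ v.2 :=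
  (Measure.quasiMeasurePreserving_fst.ae hμ).and (Measure.quasiMeasurePreserving_snd.ae hμ)

variable {μ : Measure ℝ} [SFinite μ] {r : ℝ}

lemma lintegral_prod_ofReal_ite_mul_le (r : ℝ) :
    ∫⁻ v, ENNReal.ofReal (if r * v.1 ≤ v.2 then r * v.1 else 0) ∂(μ.prod μ) =
      ∫⁻ a, ENNReal.ofReal (r * a) * μ (Ici (r * a)) ∂μ := by
  rw [lintegral_prod _ (measurable_ofReal_ite_mul_le r).aemeasurable]
  refine lintegral_congr fun a => ?_
  simp_rw [apply_ite ENNReal.ofReal, ENNReal.ofReal_zero]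
  exact lintegral_indicator_const measurableSet_Ici _

lemma lintegral_prod_markupPayment (hr : 1 < r) (hμ : ∀ᵐ x ∂μ, 0 ≤ x) :
    ∫⁻ v, ENNReal.ofReal (if r * min v.1 v.2 ≤ max v.1 v.2 then r * min v.1 v.2 else 0)
        ∂(μ.prod μ) = 2 * ∫⁻ a, ENNReal.ofReal (r * a) * μ (Ici (r * a)) ∂μ := by
  have hnonneg : ∀ a b : ℝ, 0 ≤ a → 0 ≤ (if r * a ≤ b then r * a else 0) := fun a b ha => by
    split_ifs
    · exact mul_nonneg (by linarith) ha
    · exact le_rfl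
  calc _ = ∫⁻ v, ENNReal.ofReal (if r * v.1 ≤ v.2 then r * v.1 else 0) +
        ENNReal.ofReal (if r * v.swap.1 ≤ v.swap.2 then r * v.swap.1 else 0) ∂(μ.prod μ) := by
        refine lintegral_congr_ae ?_
        filter_upwards [ae_nonneg_prod hμ] with v hv
        rw [markupPayment_eq_add hr hv.1 hv.2,
          ENNReal.ofReal_add (hnonneg _ _ hv.1) (hnonneg _ _ hv.2)]
        rfl
    _ = _ := by
        rw [lintegral_add_left (measurable_ofReal_ite_mul_le r),
          lintegral_prod_swap fun v : ℝ × ℝ =>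
            ENNReal.ofReal (if r * v.1 ≤ v.2 then r * v.1 else 0),
          lintegral_prod_ofReal_ite_mul_le, two_mul]

theorem markupRev_eq_two_mul_toReal (hr : 1 < r) (hμ : ∀ᵐ x ∂μ, 0 ≤ x) :
    markupRev r μ = 2 * (∫⁻ a, ENNReal.ofReal (r * a) * μ (Ici (r * a)) ∂μ).toReal := by
  rw [markupRev, integral_eq_lintegral_of_nonneg_ae, lintegral_prod_markupPayment hr hμ,
    ENNReal.toReal_mul, ENNReal.toReal_ofNat]
  · filter_upwards [ae_nonneg_prod hμ] with v hv
    split_ifs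
    · exact mul_nonneg (by linarith) (le_min hv.1 hv.2)
    · exact le_rfl
  · exact (Measurable.ite (measurableSet_le (by fun_prop) (by fun_prop)) (by fun_prop)
      measurable_const).aestronglyMeasurable

end Markup

def triangleSurv (q t : ℝ) : ℝ := (1 + t * (1 - q))⁻¹

section TriangleSurv

variable {q : ℝ}

lemma hasDerivAt_triangleSurv {t : ℝ} (ht : 1 + t * (1 - q) ≠ 0) :
    HasDerivAt (triangleSurv q) (-((1 - q) / (1 + t * (1 - q)) ^ 2)) t := by
  have h := (((hasDerivAt_id t).mul_const (1 - q)).const_add 1).inv ht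
  exact h.congr_deriv (by simp only [id, one_mul, neg_div])

@[simp] lemma triangleSurv_zero : triangleSurv q 0 = 1 := by simp [triangleSurv]

lemma triangleSurv_inv (hq : q ≠ 0) : triangleSurv q q⁻¹ = q := by
  simp [triangleSurv, mul_sub, hq]

lemma triangleSurv_inv_mul {r : ℝ} (hq : q ≠ 0) (hr : r ≠ 0) :
    triangleSurv q (q * r)⁻¹ = q * r / (1 - q + q * r) := by
  rw [triangleSurv, ← inv_div]
  congr 1
  field_simp
  ring

lemma tendsto_triangleSurv_zero_atTop : Tendsto (triangleSurv 0) atTop (𝓝 0) := by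
  have h : triangleSurv 0 = fun t => (1 + t)⁻¹ := by ext; simp [triangleSurv]
  rw [h]
  exact (tendsto_atTop_add_const_left atTop (1 : ℝ) tendsto_id).inv_tendsto_atTop

lemma triangleSurv_pos (hq : q < 1) {t : ℝ} (ht : 0 ≤ t) : 0 < triangleSurv q t := by
  unfold triangleSurv
  have : 0 ≤ t * (1 - q) := mul_nonneg ht (by linarith)
  positivity

lemma triangleSurv_le_one (hq : q < 1) {t : ℝ} (ht : 0 ≤ t) : triangleSurv q t ≤ 1 :=
  inv_le_one_of_one_le₀ (by nlinarith)

end TriangleSurv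

def quantileIntegrand (q r s : ℝ) : ℝ := (1 - s) / ((1 - q) * (r - s * r + s))

def quantilePrimitive (q r s : ℝ) : ℝ :=
  (Real.log (r - s * (r - 1)) - (r - s * (r - 1))) / ((1 - q) * (r - 1) ^ 2)

section Quantile

variable {q r : ℝ}

lemma hasDerivAt_quantilePrimitive (hq : q ≠ 1) (hr : r ≠ 1) {s : ℝ}
    (hs : 0 < r - s * (r - 1)) :
    HasDerivAt (quantilePrimitive q r) (quantileIntegrand q r s) s := by
  have hlin : HasDerivAt (fun s => r - s * (r - 1)) (-(r - 1)) s := by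
    simpa using ((hasDerivAt_id s).mul_const (r - 1)).const_sub r
  refine (((hlin.log hs.ne').sub hlin).div_const ((1 - q) * (r - 1) ^ 2)).congr_deriv ?_
  have hq' : 1 - q ≠ 0 := sub_ne_zero.mpr hq.symm
  have hr' : r - 1 ≠ 0 := sub_ne_zero.mpr hr
  rw [quantileIntegrand, show r - s * r + s = r - s * (r - 1) by ring]
  generalize hu : r - s * (r - 1) = u at hs ⊢
  have hu0 : u ≠ 0 := hs.ne'
  field_simp
  subst hu
  ring

lemma integral_quantileIntegrand (hq : q ≠ 1) (hr : 1 < r) {a b : ℝ} (ha : a ≤ 1)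
    (hb : b ≤ 1) :
    ∫ s in a..b, quantileIntegrand q r s = quantilePrimitive q r b - quantilePrimitive q r a := by
  have hpos : ∀ s ∈ uIcc a b, 0 < r - s * (r - 1) := fun s hs => by
    nlinarith [hs.2.trans (max_le ha hb)]
  have hcont : ContinuousOn (quantileIntegrand q r) (uIcc a b) :=
    ContinuousOn.div (by fun_prop) (by fun_prop) fun s hs =>
      mul_ne_zero (sub_ne_zero.mpr hq.symm) (by nlinarith [hpos s hs])
  exact intervalIntegral.integral_eq_sub_of_hasDerivAt
    (fun s hs => hasDerivAt_quantilePrimitive hq hr.ne' (hpos s hs)) hcont.intervalIntegrable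

lemma quantileIntegrand_triangleSurv (hq : q < 1) (hr : 0 < r) {t : ℝ} (ht : 0 ≤ t) :
    quantileIntegrand q r (triangleSurv q t) = t * triangleSurv q (r * t) := by
  have h1 : 0 < 1 + t * (1 - q) := by nlinarith
  have h2 : 0 < 1 + r * t * (1 - q) := by nlinarith [mul_nonneg hr.le ht]
  have hq' : 1 - q ≠ 0 := by linarith
  simp only [quantileIntegrand, triangleSurv]
  field_simp
  ring

lemma mul_div_one_sub_add_mul_le_one (hq0 : 0 ≤ q) (hq1 : q ≤ 1) (hr : 0 ≤ r) :
    q * r / (1 - q + q * r) ≤ 1 :=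
  div_le_one_of_le₀ (by linarith) (by nlinarith)

theorem two_mul_integral_quantileIntegrand (hq0 : 0 ≤ q) (hq1 : q < 1) (hr : 1 < r) :
    2 * r * ∫ s in (q * r / (1 - q + q * r))..1, quantileIntegrand q r s = G q r := by
  have hq' : 1 - q ≠ 0 := by linarith
  have hr' : r - 1 ≠ 0 := by linarith
  have hr'' : 1 - r ≠ 0 := by linarith
  have hD : 1 - q + q * r ≠ 0 := by nlinarith
  have hend : r - q * r / (1 - q + q * r) * (r - 1) = r / (1 - q + q * r) := by
    rw [eq_div_iff hD, sub_mul, mul_right_comm (q * r / _), div_mul_cancel₀ _ hD]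
    ring
  rw [integral_quantileIntegrand hq1.ne hr
      (mul_div_one_sub_add_mul_le_one hq0 hq1.le (by linarith)) le_rfl,
    G, quantilePrimitive, quantilePrimitive, hend, show r - 1 * (r - 1) = 1 by ring,
    Real.log_one]
  generalize hDdef : 1 - q + q * r = D at hD ⊢
  field_simp
  subst hDdef
  ring

end Quantile

def triangleDensity (q t : ℝ) : ℝ :=
  if 0 ≤ t ∧ q * t < 1 then (1 - q) / (1 + t * (1 - q)) ^ 2 else 0

section Triangle

variable {q : ℝ}

lemma triangle_eq : triangle q =
    volume.withDensity (fun t => ENNReal.ofReal (triangleDensity q t)) +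
      ENNReal.ofReal q • Measure.dirac (1 / q) := rfl

instance : SFinite (triangle q) := by rw [triangle_eq]; infer_instance

lemma measurable_triangleDensity : Measurable (triangleDensity q) :=
  Measurable.ite (measurableSet_Ici.inter
      (measurableSet_lt (measurable_id.const_mul q) measurable_const))
    (by fun_prop) measurable_const

lemma triangle_apply {s : Set ℝ} (hs : MeasurableSet s) :
    triangle q s = (∫⁻ t in s, ENNReal.ofReal (triangleDensity q t)) +
      ENNReal.ofReal q * s.indicator 1 (1 / q) := by
  rw [triangle_eq, Measure.add_apply, Measure.smul_apply, withDensity_apply _ hs,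
    Measure.dirac_apply' _ hs, smul_eq_mul]

lemma lintegral_triangle (f : ℝ → ℝ≥0∞) : ∫⁻ a, f a ∂triangle q =
    (∫⁻ t, ENNReal.ofReal (triangleDensity q t) * f t) + ENNReal.ofReal q * f (1 / q) := by
  rw [triangle_eq, lintegral_add_measure, lintegral_smul_measure, lintegral_dirac, smul_eq_mul,
    lintegral_withDensity_eq_lintegral_mul_non_measurable _
      measurable_triangleDensity.ennreal_ofReal (ae_of_all _ fun _ => ENNReal.ofReal_lt_top)]
  rfl

lemma setLIntegral_Ici_triangleDensity (hq0 : 0 ≤ q) (hq1 : q < 1) {s : ℝ} (hs : 0 ≤ s)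
    (hqs : q * s ≤ 1) :
    ∫⁻ t in Ici s, ENNReal.ofReal (triangleDensity q t) =
      ENNReal.ofReal (triangleSurv q s - q) := by
  have hae : ∀ᵐ t ∂volume.restrict (Ioi s), ENNReal.ofReal (triangleDensity q t) =
      ENNReal.ofReal (if q * t ≤ 1 then (1 - q) / (1 + t * (1 - q)) ^ 2 else 0) := by
    have hne : ∀ᵐ t ∂volume.restrict (Ioi s), t ≠ q⁻¹ := ae_restrict_of_ae (by simp [ae_iff])
    filter_upwards [hne, ae_restrict_mem measurableSet_Ioi] with t hne ht
    have hqt : q * t < 1 ↔ q * t ≤ 1 :=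
      ⟨le_of_lt, fun h => h.lt_of_ne fun h1 => hne (eq_inv_of_mul_eq_one_right h1)⟩
    simp only [triangleDensity, hs.trans (le_of_lt ht), true_and, hqt]
  rw [← Measure.restrict_congr_set Ioi_ae_eq_Ici, lintegral_congr_ae hae,
    lintegral_Ioi_ofReal_ite_mul_le_one (F := fun t => -triangleSurv q t) (L := -q) hq0 hqs,
    neg_sub_neg]
  · intro x hx _
    have : 0 ≤ x * (1 - q) := mul_nonneg (hs.trans hx) (by linarith)
    exact (hasDerivAt_triangleSurv (by positivity)).neg.congr_deriv (neg_neg _)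
  · intro x hx _
    have : 0 < 1 - q := by linarith
    positivity
  · rintro rfl
    simpa using tendsto_triangleSurv_zero_atTop.neg
  · intro hq
    rw [triangleSurv_inv hq.ne']

lemma triangle_Ici_of_mul_le_one (hq0 : 0 ≤ q) (hq1 : q < 1) {s : ℝ} (hs : 0 ≤ s)
    (hqs : q * s ≤ 1) : triangle q (Ici s) = ENNReal.ofReal (triangleSurv q s) := by
  rw [triangle_apply measurableSet_Ici, setLIntegral_Ici_triangleDensity hq0 hq1 hs hqs]
  rcases hq0.eq_or_lt with rfl | hq
  · simp
  · have hmem : 1 / q ∈ Ici s := by rw [mem_Ici, le_div_iff₀ hq]; linarith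
    have hsurv : q ≤ triangleSurv q s := by
      rw [triangleSurv, le_inv_comm₀ hq (by nlinarith), ← one_div, le_div_iff₀ hq]
      nlinarith
    rw [indicator_of_mem hmem, Pi.one_apply, mul_one, ← ENNReal.ofReal_add (by linarith) hq0,
      sub_add_cancel]

lemma triangle_Ici_of_one_lt_mul (hq0 : 0 ≤ q) {s : ℝ} (hqs : 1 < q * s) :
    triangle q (Ici s) = 0 := by
  have hq : 0 < q := hq0.lt_of_ne (by rintro rfl; simp at hqs; linarith)
  have hnotmem : 1 / q ∉ Ici s := by
    rw [mem_Ici, not_le, div_lt_iff₀ hq]; linarith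
  rw [triangle_apply measurableSet_Ici, indicator_of_notMem hnotmem, mul_zero, add_zero]
  refine setLIntegral_eq_zero measurableSet_Ici fun t ht => ?_
  have : ¬ q * t < 1 := by nlinarith [mem_Ici.mp ht]
  simp [triangleDensity, this]

lemma triangle_Iio_zero (hq0 : 0 ≤ q) : triangle q (Iio 0) = 0 := by
  rw [triangle_apply measurableSet_Iio, indicator_of_notMem (by simpa using by positivity),
    mul_zero, add_zero]
  refine setLIntegral_eq_zero measurableSet_Iio fun t ht => ?_
  simp [triangleDensity, not_le.mpr (mem_Iio.mp ht)]

lemma ae_nonneg_triangle (hq0 : 0 ≤ q) : ∀ᵐ x ∂triangle q, 0 ≤ x :=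
  ae_iff.2 (measure_mono_null (fun _ hx => not_le.mp hx) (triangle_Iio_zero hq0))

end Triangle

section Revenue

variable {q r : ℝ}

lemma ofReal_triangleDensity_mul_markup (hq0 : 0 ≤ q) (hq1 : q < 1) (hr : 1 < r) {t : ℝ}
    (ht : 0 < t) :
    ENNReal.ofReal (triangleDensity q t) * (ENNReal.ofReal (r * t) * triangle q (Ici (r * t))) =
      ENNReal.ofReal (if q * r * t ≤ 1 then
        (1 - q) / (1 + t * (1 - q)) ^ 2 * (r * t * triangleSurv q (r * t)) else 0) := by
  have hr0 : 0 < r := by linarith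
  by_cases hqrt : q * r * t ≤ 1
  · have hqt : q * t < 1 := by nlinarith
    have : 0 < 1 - q := by linarith
    rw [triangleDensity, if_pos ⟨ht.le, hqt⟩, if_pos hqrt,
      triangle_Ici_of_mul_le_one hq0 hq1 (by positivity) (by rwa [← mul_assoc]),
      ← ENNReal.ofReal_mul (by positivity), ← ENNReal.ofReal_mul (by positivity)]
  · rw [triangle_Ici_of_one_lt_mul hq0 (by rw [← mul_assoc]; exact not_le.mp hqrt), if_neg hqrt,
      mul_zero, mul_zero, ENNReal.ofReal_zero]

lemma lintegral_Ioi_markup_triangle (hq0 : 0 ≤ q) (hq1 : q < 1) (hr : 1 < r) :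
    ∫⁻ t in Ioi 0, ENNReal.ofReal (if q * r * t ≤ 1 then
        (1 - q) / (1 + t * (1 - q)) ^ 2 * (r * t * triangleSurv q (r * t)) else 0) =
      ENNReal.ofReal (r * (quantilePrimitive q r 1 -
        quantilePrimitive q r (q * r / (1 - q + q * r)))) := by
  have hr0 : 0 < r := by linarith
  rw [lintegral_Ioi_ofReal_ite_mul_le_one
    (F := fun t => -(r * quantilePrimitive q r (triangleSurv q t)))
    (L := -(r * quantilePrimitive q r (q * r / (1 - q + q * r)))) (by positivity) (by simp),
    triangleSurv_zero, neg_sub_neg, mul_sub]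
  · intro t ht _
    have hS := hasDerivAt_triangleSurv (q := q) (t := t) (by nlinarith)
    have hC := hasDerivAt_quantilePrimitive hq1.ne hr.ne'
      (s := triangleSurv q t) (by nlinarith [triangleSurv_le_one hq1 ht])
    refine ((hC.comp t hS).const_mul r).neg.congr_deriv ?_
    rw [quantileIntegrand_triangleSurv hq1 hr0 ht]
    ring
  · intro t ht _
    have := triangleSurv_pos hq1 (by positivity : 0 ≤ r * t)
    have : 0 < 1 - q := by linarith
    positivity
  · intro hqr
    obtain rfl : q = 0 := (mul_eq_zero.mp hqr).resolve_right hr0.ne'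
    have hC := (hasDerivAt_quantilePrimitive (q := 0) (s := 0) (by norm_num) hr.ne'
      (by simpa using hr0)).continuousAt
    simpa using ((hC.tendsto.comp tendsto_triangleSurv_zero_atTop).const_mul r).neg
  · intro hqr
    rw [triangleSurv_inv_mul (left_ne_zero_of_mul hqr.ne') hr0.ne']

lemma lintegral_markup_triangle (hq0 : 0 ≤ q) (hq1 : q < 1) (hr : 1 < r) :
    ∫⁻ a, ENNReal.ofReal (r * a) * triangle q (Ici (r * a)) ∂triangle q =
      ENNReal.ofReal (r * (quantilePrimitive q r 1 -
        quantilePrimitive q r (q * r / (1 - q + q * r)))) := by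
  -- The atom at `1 / q` pays nothing: the markup price `r / q` exceeds every value.
  have hatom : ENNReal.ofReal q * (ENNReal.ofReal (r * (1 / q)) * triangle q (Ici (r * (1 / q))))
      = 0 := by
    rcases hq0.eq_or_lt with rfl | hq
    · simp
    · rw [triangle_Ici_of_one_lt_mul hq0 (by rwa [mul_one_div, mul_div_cancel₀ _ hq.ne']),
        mul_zero, mul_zero]
  have hsupp : (Function.support fun t => ENNReal.ofReal (triangleDensity q t) *
      (ENNReal.ofReal (r * t) * triangle q (Ici (r * t)))) ⊆ Ioi 0 := by
    intro t ht
    by_contra h0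
    rcases (not_lt.mp (mt mem_Ioi.mpr h0)).lt_or_eq with hlt | rfl
    · exact ht (by simp [triangleDensity, not_le.mpr hlt])
    · exact ht (by simp)
  rw [lintegral_triangle, hatom, add_zero, ← setLIntegral_eq_of_support_subset hsupp,
    setLIntegral_congr_fun measurableSet_Ioi fun t ht =>
      ofReal_triangleDensity_mul_markup hq0 hq1 hr ht,
    lintegral_Ioi_markup_triangle hq0 hq1 hr]

theorem markupRev_triangle (hq0 : 0 ≤ q) (hq1 : q < 1) (hr : 1 < r) :
    markupRev r (triangle q) =
      2 * r * ∫ s in (q * r / (1 - q + q * r))..1, quantileIntegrand q r s := by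
  have ha := mul_div_one_sub_add_mul_le_one hq0 hq1.le (by linarith : 0 ≤ r)
  have hnonneg : 0 ≤ ∫ s in (q * r / (1 - q + q * r))..1, quantileIntegrand q r s :=
    intervalIntegral.integral_nonneg ha fun s hs =>
      div_nonneg (by linarith [hs.2]) (mul_nonneg (by linarith) (by nlinarith [hs.2]))
  rw [markupRev_eq_two_mul_toReal hr (ae_nonneg_triangle hq0),
    lintegral_markup_triangle hq0 hq1 hr, ← integral_quantileIntegrand hq1.ne hr ha le_rfl,
    ENNReal.toReal_ofReal (by positivity)]
  ring

end Revenue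

/-- for `r > 1` and `q̄ ∈ [0,1)`, the expected revenue of the
`r`-markup mechanism on two i.i.d. draws from `T_q̄` equals `G q̄ r`, and the
corresponding integral identity holds. -/
theorem stmt5 (r q : ℝ) (hr : 1 < r) (hq : q ∈ Set.Ico (0 : ℝ) 1) :
    markupRev r (triangle q) = G q r ∧
    2 * r * (∫ s in (q * r / (1 - q + q * r))..1,
        (1 - s) / ((1 - q) * (r - s * r + s))) = G q r := by
  obtain ⟨hq0, hq1⟩ := hq
  have hG := two_mul_integral_quantileIntegrand hq0 hq1 hr
  exact ⟨(markupRev_triangle hq0 hq1 hr).trans hG, hG⟩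
end
end

section
/- For every r ≥ 1, q̄ ∈ (0,1), and q̄′ with q̄r/(q̄r + 1 − q̄) ≤ q̄′ ≤ min{r·q̄, 1}, the expected revenue of the second-price auction on two values drawn i.i.d. from the normalized quadrilateral distribution Q_{q̄,q̄′,r} equals q̄′ + (1 − q̄)·q̄′/(r·q̄); that is, E[min(v_1, v_2)] = q̄′ + (1 − q̄)·q̄′/(r·q̄). Consequently this revenue is strictly increasing in q̄′ with derivative 1 + (1−q̄)/(r·q̄) ≥ 1. -/
open MeasureTheory Set

noncomputable section

/-!
The quadrilateral distribution is an absolutely continuous part plus an atom of mass `q̄` at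
`1/q̄`. On each of the two pieces `[0, 1/(r q̄))` and `[1/(r q̄), 1/q̄)` its density has the
form `c m / (m t + k)²`, the derivative of `-c / (m t + k)`, so the survival function
`Pr(v > t)` is the hyperbola `c / (m t + k)` there. By the layer-cake formula
`E[min(v₁, v₂)] = ∫₀^∞ Pr(v > t)² dt`, and
`∫ₐᵇ (c / (m t + k))² dt = c² (b - a) / ((m a + k)(m b + k))`, so the two pieces contribute
`q̄'/(r q̄)` and `q̄'(r - 1)/r`; their sum is affine in `q̄'` with slope `1 + (1 - q̄)/(r q̄)`.
-/

theorem hasDerivAt_mul_add_const (m k s : ℝ) : HasDerivAt (fun u => m * u + k) m s := by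
  simpa using ((hasDerivAt_id s).const_mul m).add_const k

theorem integral_mul_div_sq_affine {a b c m k : ℝ} (h : ∀ s ∈ uIcc a b, m * s + k ≠ 0) :
    ∫ s in a..b, c * m / (m * s + k) ^ 2 = c / (m * a + k) - c / (m * b + k) := by
  have hderiv : ∀ s ∈ uIcc a b,
      HasDerivAt (fun u => -c / (m * u + k)) (c * m / (m * s + k) ^ 2) s := fun s hs =>
    ((hasDerivAt_const s (-c)).div (hasDerivAt_mul_add_const m k s) (h s hs)).congr_deriv
      (by ring)
  have hcont : ContinuousOn (fun s => c * m / (m * s + k) ^ 2) (uIcc a b) :=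
    continuousOn_const.div (by fun_prop) fun s hs => pow_ne_zero 2 (h s hs)
  rw [intervalIntegral.integral_eq_sub_of_hasDerivAt hderiv hcont.intervalIntegrable]
  ring

theorem integral_div_affine_sq {a b c m k : ℝ} (h : ∀ s ∈ uIcc a b, m * s + k ≠ 0) :
    ∫ s in a..b, (c / (m * s + k)) ^ 2 = c ^ 2 * (b - a) / ((m * a + k) * (m * b + k)) := by
  have ha : m * a + k ≠ 0 := h a left_mem_uIcc
  -- Unlike `-c² / (m (m s + k))` or `c² s / (k (m s + k))`, this antiderivative
  -- needs neither `m ≠ 0` nor `k ≠ 0`.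
  have hderiv : ∀ s ∈ uIcc a b,
      HasDerivAt (fun u => c ^ 2 * (u - a) / ((m * a + k) * (m * u + k)))
        ((c / (m * s + k)) ^ 2) s := by
    intro s hs
    have hnum : HasDerivAt (fun u => c ^ 2 * (u - a)) (c ^ 2) s := by
      simpa using ((hasDerivAt_id s).sub_const a).const_mul (c ^ 2)
    have hs' := h s hs
    exact (hnum.div ((hasDerivAt_mul_add_const m k s).const_mul (m * a + k))
      (mul_ne_zero ha hs')).congr_deriv (by field_simp; ring)
  have hcont : ContinuousOn (fun s => (c / (m * s + k)) ^ 2) (uIcc a b) :=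
    (continuousOn_const.div (by fun_prop) h).pow 2
  rw [intervalIntegral.integral_eq_sub_of_hasDerivAt hderiv hcont.intervalIntegrable]
  simp

theorem intervalIntegrable_mul_div_sq_affine {a b c m k : ℝ}
    (h : ∀ s ∈ uIcc a b, m * s + k ≠ 0) :
    IntervalIntegrable (fun s => c * m / (m * s + k) ^ 2) volume a b :=
  (continuousOn_const.div (by fun_prop) fun s hs => pow_ne_zero 2 (h s hs)).intervalIntegrable

theorem withDensity_add_dirac_real_Ioi {f : ℝ → ℝ} (hf : Integrable f) (hf0 : 0 ≤ f) {b c t : ℝ}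
    (hc : 0 ≤ c) (hfb : ∀ s, b < s → f s = 0) (htb : t < b) :
    (volume.withDensity (fun s => ENNReal.ofReal (f s)) + ENNReal.ofReal c • Measure.dirac b).real
      (Ioi t) = (∫ s in t..b, f s) + c := by
  have htail : ∫ s in Ioi t, f s = ∫ s in t..b, f s := by
    rw [intervalIntegral.integral_of_le htb.le]
    exact setIntegral_eq_of_subset_of_forall_sdiff_eq_zero measurableSet_Ioi Ioc_subset_Ioi_self
      fun s hs => hfb s (not_le.1 fun h => hs.2 ⟨hs.1, h⟩)
  have hnonneg : 0 ≤ ∫ s in t..b, f s := intervalIntegral.integral_nonneg htb.le fun s _ => hf0 s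
  rw [measureReal_def, Measure.add_apply, Measure.smul_apply,
    withDensity_apply _ measurableSet_Ioi, Measure.dirac_apply' _ measurableSet_Ioi,
    indicator_of_mem (show b ∈ Ioi t from htb),
    ← ofReal_integral_eq_lintegral_ofReal hf.integrableOn (ae_of_all _ hf0), htail, Pi.one_apply,
    smul_eq_mul, mul_one, ← ENNReal.ofReal_add _ hc, ENNReal.toReal_ofReal (add_nonneg hnonneg hc)]
  exact hnonneg

theorem integral_min_prod_eq_integral_sq {μ : Measure ℝ} [IsFiniteMeasure μ]
    (h0 : ∀ᵐ v ∂μ, 0 ≤ v) (hint : Integrable id μ) :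
    ∫ v : ℝ × ℝ, min v.1 v.2 ∂μ.prod μ = ∫ t in Ioi 0, μ.real (Ioi t) ^ 2 := by
  have h0' : ∀ᵐ v ∂μ.prod μ, 0 ≤ v.1 ∧ 0 ≤ v.2 :=
    (Measure.quasiMeasurePreserving_fst.ae h0).and (Measure.quasiMeasurePreserving_snd.ae h0)
  have hmin : Integrable (fun v : ℝ × ℝ => min v.1 v.2) (μ.prod μ) :=
    (hint.comp_fst μ).mono' (continuous_fst.min continuous_snd).aestronglyMeasurable
      (h0'.mono fun v hv => by
        rw [Real.norm_eq_abs, abs_of_nonneg (le_min hv.1 hv.2)]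
        exact min_le_left _ _)
  rw [hmin.integral_eq_integral_meas_lt (h0'.mono fun v hv => le_min hv.1 hv.2)]
  refine setIntegral_congr_fun measurableSet_Ioi fun t _ => ?_
  have hprod : {v : ℝ × ℝ | t < min v.1 v.2} = Ioi t ×ˢ Ioi t := by
    ext v
    simp
  rw [hprod, measureReal_prod_prod, sq]

theorem intervalIntegrable_real_Ioi_sq (μ : Measure ℝ) [IsFiniteMeasure μ] (a b : ℝ) :
    IntervalIntegrable (fun t => μ.real (Ioi t) ^ 2) volume a b :=
  Antitone.intervalIntegrable fun _ _ hst =>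
    pow_le_pow_left₀ measureReal_nonneg (measureReal_mono (Ioi_subset_Ioi hst)) 2

def quadriDensity (q q' r t : ℝ) : ℝ :=
  if 0 ≤ t ∧ t * (r * q) < 1 then
    q' * (r * q) * (1 - q') / (q' + t * (r * q) * (1 - q')) ^ 2
  else if 1 ≤ t * (r * q) ∧ t * q < 1 then
    (q' * q * (r - 1)) * ((r * q) * (q' - q)) /
      ((r * q) * (q' - q) * t + (r * q - q')) ^ 2
  else 0

theorem quadri_eq_withDensity_add_dirac (q q' r : ℝ) :
    quadri q q' r = volume.withDensity (fun t => ENNReal.ofReal (quadriDensity q q' r t))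
      + ENNReal.ofReal q • Measure.dirac (1 / q) := rfl

section Quadrilateral

variable {q q' r t : ℝ}

theorem quadriDensity_nonneg (hq : 0 < q) (hr : 1 ≤ r) (hqq' : q ≤ q') (hq'1 : q' ≤ 1) (t : ℝ) :
    0 ≤ quadriDensity q q' r t := by
  have : 0 ≤ q' := hq.le.trans hqq'
  unfold quadriDensity
  split_ifs <;> positivity

theorem quadriDensity_eq_zero (hq : 0 < q) (hr : 1 ≤ r) (ht : t ∉ Icc 0 (1 / q)) :
    quadriDensity q q' r t = 0 := by
  rw [mem_Icc, le_div_iff₀ hq] at ht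
  have hrq : 0 < r * q := by positivity
  unfold quadriDensity
  split_ifs with h₁ h₂
  · exact absurd ⟨h₁.1, by nlinarith⟩ ht
  · exact absurd ⟨by nlinarith, by nlinarith⟩ ht
  · rfl

theorem quadriDensity_eqOn_lower (hq : 0 < q) (hr : 1 ≤ r) :
    EqOn (quadriDensity q q' r)
      (fun s => q' * (r * q * (1 - q')) / (r * q * (1 - q') * s + q') ^ 2)
      (Ico 0 (1 / (r * q))) := by
  intro s ⟨hs0, hs⟩
  rw [lt_div_iff₀ (by positivity)] at hs
  simp only [quadriDensity, if_pos (And.intro hs0 hs)]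
  ring

theorem quadriDensity_eqOn_upper (hq : 0 < q) (hr : 1 ≤ r) :
    EqOn (quadriDensity q q' r)
      (fun s => q' * q * (r - 1) * (r * q * (q' - q)) /
        (r * q * (q' - q) * s + (r * q - q')) ^ 2)
      (Ico (1 / (r * q)) (1 / q)) := by
  intro s ⟨hs₁, hs₂⟩
  rw [div_le_iff₀ (by positivity)] at hs₁
  rw [lt_div_iff₀ hq] at hs₂
  simp only [quadriDensity, if_neg (fun h : 0 ≤ s ∧ s * (r * q) < 1 => h.2.not_ge hs₁),
    if_pos (And.intro hs₁ hs₂)]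

theorem quadri_lower_denom_pos (hq : 0 < q) (hr : 1 ≤ r) (hq' : 0 < q') (hq'1 : q' ≤ 1)
    (ht : 0 ≤ t) :
    0 < r * q * (1 - q') * t + q' := by
  positivity

theorem quadri_lower_denom_right (hq : q ≠ 0) (hr : r ≠ 0) :
    r * q * (1 - q') * (1 / (r * q)) + q' = 1 := by
  field_simp
  ring

theorem quadri_upper_denom_left (hq : q ≠ 0) (hr : r ≠ 0) :
    r * q * (q' - q) * (1 / (r * q)) + (r * q - q') = q * (r - 1) := by
  field_simp
  ring

theorem quadri_upper_denom_right (hq : q ≠ 0) :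
    r * q * (q' - q) * (1 / q) + (r * q - q') = q' * (r - 1) := by
  field_simp
  ring

theorem quadri_upper_denom_pos (hq : 0 < q) (hr : 1 < r) (hqq' : q ≤ q') (ht : 1 / (r * q) ≤ t) :
    0 < r * q * (q' - q) * t + (r * q - q') :=
  calc 0 < q * (r - 1) := mul_pos hq (sub_pos.2 hr)
    _ = r * q * (q' - q) * (1 / (r * q)) + (r * q - q') :=
      (quadri_upper_denom_left hq.ne' (by positivity)).symm
    _ ≤ r * q * (q' - q) * t + (r * q - q') := by gcongr

theorem integral_quadriDensity_lower (hq : 0 < q) (hr : 1 ≤ r) (hqq' : q ≤ q') (hq'1 : q' ≤ 1)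
    (ht : t ∈ Icc 0 (1 / (r * q))) :
    ∫ s in t..1 / (r * q), quadriDensity q q' r s = q' / (r * q * (1 - q') * t + q') - q' := by
  have hq' : 0 < q' := hq.trans_le hqq'
  rw [intervalIntegral.integral_congr_Ioo_of_le ht.2
      ((quadriDensity_eqOn_lower hq hr).mono
        (Ioo_subset_Ico_self.trans (Ico_subset_Ico_left ht.1))),
    integral_mul_div_sq_affine fun s hs =>
      (quadri_lower_denom_pos hq hr hq' hq'1 (ht.1.trans (uIcc_of_le ht.2 ▸ hs).1)).ne']
  rw [quadri_lower_denom_right hq.ne' (by positivity)]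
  ring

theorem integral_quadriDensity_upper (hq : 0 < q) (hr : 1 < r) (hqq' : q ≤ q')
    (ht : t ∈ Icc (1 / (r * q)) (1 / q)) :
    ∫ s in t..1 / q, quadriDensity q q' r s
      = q' * q * (r - 1) / (r * q * (q' - q) * t + (r * q - q')) - q := by
  have hq' : 0 < q' := hq.trans_le hqq'
  rw [intervalIntegral.integral_congr_Ioo_of_le ht.2
      ((quadriDensity_eqOn_upper hq hr.le).mono
        (Ioo_subset_Ico_self.trans (Ico_subset_Ico_left ht.1))),
    integral_mul_div_sq_affine fun s hs =>
      (quadri_upper_denom_pos hq hr hqq' (ht.1.trans (uIcc_of_le ht.2 ▸ hs).1)).ne']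
  have : r - 1 ≠ 0 := (sub_pos.2 hr).ne'
  rw [quadri_upper_denom_right hq.ne']
  field_simp

theorem integral_quadriDensity_upper_piece (hq : 0 < q) (hr : 1 ≤ r) (hqq' : q ≤ q')
    (hq'r : q' ≤ r * q) :
    ∫ s in 1 / (r * q)..1 / q, quadriDensity q q' r s = q' - q := by
  rcases hr.eq_or_lt with rfl | hr
  · rw [one_mul, intervalIntegral.integral_same, le_antisymm (one_mul q ▸ hq'r) hqq', sub_self]
  · have hrq : r * q ≠ 0 := by positivity
    rw [integral_quadriDensity_upper hq hr hqq'
      ⟨le_rfl, one_div_le_one_div_of_le hq (by nlinarith)⟩,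
      quadri_upper_denom_left hq.ne' (by positivity)]
    field_simp

theorem integrable_quadriDensity (hq : 0 < q) (hr : 1 ≤ r) (hqq' : q ≤ q') (hq'1 : q' ≤ 1) :
    Integrable (quadriDensity q q' r) := by
  have hq' : 0 < q' := hq.trans_le hqq'
  have hrq : 0 < 1 / (r * q) := one_div_pos.2 (mul_pos (by linarith) hq)
  have hle : 1 / (r * q) ≤ 1 / q := one_div_le_one_div_of_le hq (by nlinarith)
  have hlower : IntervalIntegrable (quadriDensity q q' r) volume 0 (1 / (r * q)) := by
    refine (intervalIntegrable_congr_uIoo ?_).2 (intervalIntegrable_mul_div_sq_affine (c := q')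
      fun s hs => (quadri_lower_denom_pos hq hr hq' hq'1 (uIcc_of_le hrq.le ▸ hs).1).ne')
    rw [uIoo_of_le hrq.le]
    exact (quadriDensity_eqOn_lower hq hr).mono Ioo_subset_Ico_self
  have hupper : IntervalIntegrable (quadriDensity q q' r) volume (1 / (r * q)) (1 / q) := by
    rcases hr.eq_or_lt with rfl | hr
    · simp only [one_mul, IntervalIntegrable.refl]
    refine (intervalIntegrable_congr_uIoo ?_).2 (intervalIntegrable_mul_div_sq_affine
      (c := q' * q * (r - 1)) fun s hs =>
        (quadri_upper_denom_pos hq hr hqq' (uIcc_of_le hle ▸ hs).1).ne')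
    rw [uIoo_of_le hle]
    exact (quadriDensity_eqOn_upper hq hr.le).mono Ioo_subset_Ico_self
  refine IntegrableOn.integrable_of_forall_notMem_eq_zero (s := Icc 0 (1 / q)) ?_
    fun t ht => quadriDensity_eq_zero hq hr ht
  rw [integrableOn_Icc_iff_integrableOn_Ioc, ← intervalIntegrable_iff_integrableOn_Ioc_of_le
    (by positivity)]
  exact hlower.trans hupper

theorem quadri_compl_Icc_eq_zero (hq : 0 < q) (hr : 1 ≤ r) :
    quadri q q' r (Icc 0 (1 / q))ᶜ = 0 := by
  have hdens : ∫⁻ t in (Icc 0 (1 / q))ᶜ, ENNReal.ofReal (quadriDensity q q' r t) = 0 := by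
    rw [setLIntegral_congr_fun measurableSet_Icc.compl fun t ht => by
      rw [quadriDensity_eq_zero hq hr ht, ENNReal.ofReal_zero]]
    exact lintegral_zero
  rw [quadri_eq_withDensity_add_dirac, Measure.add_apply, Measure.smul_apply,
    withDensity_apply _ measurableSet_Icc.compl, Measure.dirac_apply' _ measurableSet_Icc.compl,
    indicator_of_notMem (not_not.2 ⟨by positivity, le_rfl⟩), hdens]
  simp

theorem isFiniteMeasure_quadri (hq : 0 < q) (hr : 1 ≤ r) (hqq' : q ≤ q') (hq'1 : q' ≤ 1) :
    IsFiniteMeasure (quadri q q' r) := by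
  have := isFiniteMeasure_withDensity_ofReal (integrable_quadriDensity hq hr hqq' hq'1).2
  have := (Measure.dirac (1 / q)).smul_finite (ENNReal.ofReal_ne_top (r := q))
  rw [quadri_eq_withDensity_add_dirac]
  infer_instance

theorem quadri_real_Ioi_of_mem_lower (hq : 0 < q) (hr : 1 ≤ r) (hqq' : q ≤ q')
    (hq'r : q' ≤ r * q) (hq'1 : q' ≤ 1) (ht : t ∈ Ico 0 (1 / (r * q))) :
    (quadri q q' r).real (Ioi t) = q' / (r * q * (1 - q') * t + q') := by
  have hf := integrable_quadriDensity hq hr hqq' hq'1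
  have hle : 1 / (r * q) ≤ 1 / q := one_div_le_one_div_of_le hq (by nlinarith)
  rw [quadri_eq_withDensity_add_dirac, withDensity_add_dirac_real_Ioi hf
      (quadriDensity_nonneg hq hr hqq' hq'1) hq.le
      (fun s hs => quadriDensity_eq_zero hq hr fun h => hs.not_ge h.2) (ht.2.trans_le hle),
    ← intervalIntegral.integral_add_adjacent_intervals hf.intervalIntegrable hf.intervalIntegrable,
    integral_quadriDensity_lower hq hr hqq' hq'1 (Ico_subset_Icc_self ht),
    integral_quadriDensity_upper_piece hq hr hqq' hq'r]
  ring

theorem quadri_real_Ioi_of_mem_upper (hq : 0 < q) (hr : 1 ≤ r) (hqq' : q ≤ q')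
    (hq'1 : q' ≤ 1) (ht : t ∈ Ico (1 / (r * q)) (1 / q)) :
    (quadri q q' r).real (Ioi t) = q' * q * (r - 1) / (r * q * (q' - q) * t + (r * q - q')) := by
  have hr1 : 1 < r := lt_of_le_of_ne hr fun h => by
    rw [← h, one_mul] at ht
    exact ht.1.not_gt ht.2
  rw [quadri_eq_withDensity_add_dirac, withDensity_add_dirac_real_Ioi
      (integrable_quadriDensity hq hr hqq' hq'1) (quadriDensity_nonneg hq hr hqq' hq'1) hq.le
      (fun s hs => quadriDensity_eq_zero hq hr fun h => hs.not_ge h.2) ht.2,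
    integral_quadriDensity_upper hq hr1 hqq' (Ico_subset_Icc_self ht)]
  ring

theorem quadri_Ioi_eq_zero (hq : 0 < q) (hr : 1 ≤ r) (ht : 1 / q ≤ t) :
    quadri q q' r (Ioi t) = 0 :=
  measure_mono_null (fun _ (hs : t < _) hs' => (ht.trans_lt hs).not_ge (mem_Icc.1 hs').2)
    (quadri_compl_Icc_eq_zero hq hr)

theorem integral_quadri_real_Ioi_sq_lower (hq : 0 < q) (hr : 1 ≤ r) (hqq' : q ≤ q')
    (hq'r : q' ≤ r * q) (hq'1 : q' ≤ 1) :
    ∫ t in 0..1 / (r * q), (quadri q q' r).real (Ioi t) ^ 2 = q' / (r * q) := by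
  have hq' : 0 < q' := hq.trans_le hqq'
  have hb : 0 ≤ 1 / (r * q) := by positivity
  rw [intervalIntegral.integral_congr_Ioo_of_le hb fun t ht => by
      rw [quadri_real_Ioi_of_mem_lower hq hr hqq' hq'r hq'1 (Ioo_subset_Ico_self ht)],
    integral_div_affine_sq fun s hs =>
      (quadri_lower_denom_pos hq hr hq' hq'1 (uIcc_of_le hb ▸ hs).1).ne']
  rw [quadri_lower_denom_right hq.ne' (by positivity), mul_zero, zero_add, sub_zero, mul_one]
  field_simp

theorem integral_quadri_real_Ioi_sq_upper (hq : 0 < q) (hr : 1 ≤ r) (hqq' : q ≤ q')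
    (hq'1 : q' ≤ 1) :
    ∫ t in 1 / (r * q)..1 / q, (quadri q q' r).real (Ioi t) ^ 2 = q' * (r - 1) / r := by
  rcases hr.eq_or_lt with rfl | hr1
  · simp
  have hle : 1 / (r * q) ≤ 1 / q := one_div_le_one_div_of_le hq (by nlinarith)
  rw [intervalIntegral.integral_congr_Ioo_of_le hle fun t ht => by
      rw [quadri_real_Ioi_of_mem_upper hq hr hqq' hq'1 (Ioo_subset_Ico_self ht)],
    integral_div_affine_sq fun s hs =>
      (quadri_upper_denom_pos hq hr1 hqq' (uIcc_of_le hle ▸ hs).1).ne']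
  rw [quadri_upper_denom_left hq.ne' (by positivity), quadri_upper_denom_right hq.ne']
  field_simp

theorem integral_min_quadri (hq : 0 < q) (hr : 1 ≤ r) (hqq' : q ≤ q') (hq'r : q' ≤ r * q)
    (hq'1 : q' ≤ 1) :
    ∫ v : ℝ × ℝ, min v.1 v.2 ∂(quadri q q' r).prod (quadri q q' r)
      = q' + (1 - q) * q' / (r * q) := by
  have := isFiniteMeasure_quadri hq hr hqq' hq'1
  have hsupp : ∀ᵐ v ∂quadri q q' r, v ∈ Icc 0 (1 / q) :=
    mem_ae_iff.2 (quadri_compl_Icc_eq_zero hq hr)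
  have hint : Integrable id (quadri q q' r) :=
    (integrable_const (1 / q)).mono' aestronglyMeasurable_id (hsupp.mono fun v hv => by
      rw [id, Real.norm_eq_abs, abs_of_nonneg hv.1]
      exact hv.2)
  rw [integral_min_prod_eq_integral_sq (hsupp.mono fun v hv => hv.1) hint,
    setIntegral_eq_of_subset_of_forall_sdiff_eq_zero measurableSet_Ioi Ioc_subset_Ioi_self
      fun t ht => by
        rw [measureReal_def, quadri_Ioi_eq_zero hq hr (not_le.1 fun h => ht.2 ⟨ht.1, h⟩).le]
        simp,
    ← intervalIntegral.integral_of_le (by positivity),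
    ← intervalIntegral.integral_add_adjacent_intervals (intervalIntegrable_real_Ioi_sq _ _ _)
      (intervalIntegrable_real_Ioi_sq _ _ _),
    integral_quadri_real_Ioi_sq_lower hq hr hqq' hq'r hq'1,
    integral_quadri_real_Ioi_sq_upper hq hr hqq' hq'1]
  field_simp
  ring

end Quadrilateral

/-- the second-price auction revenue on two i.i.d. draws from the
quadrilateral distribution `Q_{q̄,q̄',r}` equals `q̄' + (1-q̄)·q̄'/(r·q̄)`; hence it is
strictly increasing in `q̄'` with slope `1 + (1-q̄)/(r·q̄) ≥ 1`. -/
theorem stmt11 (r q : ℝ) (hr : 1 ≤ r) (hq : q ∈ Set.Ioo (0 : ℝ) 1) :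
    (∀ q' : ℝ, q * r / (q * r + 1 - q) ≤ q' → q' ≤ min (r * q) 1 →
      (∫ v : ℝ × ℝ, min v.1 v.2 ∂((quadri q q' r).prod (quadri q q' r)))
        = q' + (1 - q) * q' / (r * q)) ∧
    1 ≤ 1 + (1 - q) / (r * q) ∧
    StrictMonoOn
      (fun s => ∫ v : ℝ × ℝ, min v.1 v.2 ∂((quadri q s r).prod (quadri q s r)))
      (Set.Icc (q * r / (q * r + 1 - q)) (min (r * q) 1)) := by
  obtain ⟨hq0, hq1⟩ := hq
  have hq_le : q ≤ q * r / (q * r + 1 - q) := by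
    rw [le_div_iff₀ (by nlinarith)]
    nlinarith [mul_nonneg (mul_nonneg hq0.le (sub_nonneg.2 hq1.le)) (sub_nonneg.2 hr)]
  have hrev : ∀ q' : ℝ, q * r / (q * r + 1 - q) ≤ q' → q' ≤ min (r * q) 1 →
      (∫ v : ℝ × ℝ, min v.1 v.2 ∂((quadri q q' r).prod (quadri q q' r)))
        = q' + (1 - q) * q' / (r * q) := fun q' hlow hhigh =>
    integral_min_quadri hq0 hr (hq_le.trans hlow) (hhigh.trans (min_le_left _ _))
      (hhigh.trans (min_le_right _ _))
  have hslope : 0 ≤ (1 - q) / (r * q) := div_nonneg (by linarith) (mul_pos (by linarith) hq0).le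
  refine ⟨hrev, le_add_of_nonneg_right hslope, fun a ha b hb hab => ?_⟩
  dsimp only
  calc _ = a * (1 + (1 - q) / (r * q)) := by rw [hrev a ha.1 ha.2]; ring
    _ < b * (1 + (1 - q) / (r * q)) := by gcongr
    _ = _ := by rw [hrev b hb.1 hb.2]; ring
end
end

section
/- Define h_{α,r}(q̄) := ( α + (1−α)·G(q̄, r) ) / (2 − q̄), where G(q̄, r) = (2r / ((1−q̄)(r−1))) · ( (1−q̄)/(1−q̄+q̄r) + ln( r/(1−q̄+q̄r) ) / (1−r) ). Then for every α ∈ [0.8, 0.81], r ∈ [2.445, 2.449], and q̄ ∈ [0.093, 0.094], the second derivative of h_{α,r} with respect to q̄ satisfies h_{α,r}″(q̄) > 0.7; in particular h_{α,r} is strictly convex on [0.093, 0.094]. -/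
open MeasureTheory Set

noncomputable section

/-!
Write `h = N / (2 - s)` with `N = α + (1 - α) G`. Since the denominator is affine,
`h'' = N'' / (2 - s) + 2 N' / (2 - s)^2 + 2 N / (2 - s)^3`, and `G`, `G'`, `G''` have closed
forms in `r`, `1 - s`, `u = 1 - s + s r` and `log (r / u)`. On the box every summand of these closed
forms is monotone in each of these quantities separately, so interval bounds give
`G'' ≥ 7.75`, `G' ≥ -2.75` and `G ≥ 0.95`, whence `h'' > 0.7`; strict convexity follows from
`h'' > 0`.
-/

open Real

section DivConstSub

variable {f f' f'' : ℝ → ℝ} {g g' c x : ℝ}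

theorem HasDerivAt.div_const_sub (hf : HasDerivAt f g x) (hx : x ≠ c) :
    HasDerivAt (fun t => f t / (c - t)) (g / (c - x) + f x / (c - x) ^ 2) x := by
  have hc : c - x ≠ 0 := sub_ne_zero.2 hx.symm
  refine (hf.fun_div ((hasDerivAt_id' x).const_sub c) hc).congr_deriv ?_
  field_simp
  ring

theorem HasDerivAt.deriv_div_const_sub (hf : HasDerivAt f (f' x) x) (hf' : HasDerivAt f' g' x)
    (hx : x ≠ c) :
    HasDerivAt (fun t => f' t / (c - t) + f t / (c - t) ^ 2)
      (g' / (c - x) + 2 * f' x / (c - x) ^ 2 + 2 * f x / (c - x) ^ 3) x := by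
  have hc : c - x ≠ 0 := sub_ne_zero.2 hx.symm
  refine ((hf'.div_const_sub hx).fun_add (hf.fun_div (((hasDerivAt_id' x).const_sub c).fun_pow 2)
    (pow_ne_zero 2 hc))).congr_deriv ?_
  field_simp
  ring

theorem deriv_deriv_div_const_sub {U : Set ℝ} (hU : IsOpen U) (hcU : c ∉ U)
    (hf : ∀ y ∈ U, HasDerivAt f (f' y) y) (hf' : ∀ y ∈ U, HasDerivAt f' (f'' y) y)
    (hx : x ∈ U) :
    deriv (deriv fun t => f t / (c - t)) x =
      f'' x / (c - x) + 2 * f' x / (c - x) ^ 2 + 2 * f x / (c - x) ^ 3 := by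
  have hderiv : deriv (fun t => f t / (c - t)) =ᶠ[nhds x]
      fun t => f' t / (c - t) + f t / (c - t) ^ 2 :=
    Filter.eventually_of_mem (hU.mem_nhds hx) fun y hy =>
      ((hf y hy).div_const_sub (ne_of_mem_of_not_mem hy hcU)).deriv
  rw [hderiv.deriv_eq]
  exact ((hf x hx).deriv_div_const_sub (hf' x hx) (ne_of_mem_of_not_mem hx hcU)).deriv

end DivConstSub

def derivG (s r : ℝ) : ℝ :=
  -(2 * r) / (1 - s + s * r) ^ 2 + 2 * r / ((r - 1) * (1 - s + s * r) * (1 - s))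
    - 2 * r * log (r / (1 - s + s * r)) / ((r - 1) ^ 2 * (1 - s) ^ 2)

def deriv2G (s r : ℝ) : ℝ :=
  4 * r * (r - 1) / (1 - s + s * r) ^ 3 - 2 * r / ((1 - s + s * r) ^ 2 * (1 - s))
    + 4 * r / ((r - 1) * (1 - s + s * r) * (1 - s) ^ 2)
    - 4 * r * log (r / (1 - s + s * r)) / ((r - 1) ^ 2 * (1 - s) ^ 3)

section Derivatives

variable {r s : ℝ}

theorem G_eq (hr : r ≠ 1) (hs : s ≠ 1) (hu : 1 - s + s * r ≠ 0) :
    G s r = 2 * r / (r - 1) / (1 - s + s * r)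
      - 2 * r / (r - 1) ^ 2 * (log (r / (1 - s + s * r)) / (1 - s)) := by
  have hr' : r - 1 ≠ 0 := sub_ne_zero.2 hr
  have hr'' : 1 - r ≠ 0 := sub_ne_zero.2 (Ne.symm hr)
  have hs' : 1 - s ≠ 0 := sub_ne_zero.2 (Ne.symm hs)
  rw [G]
  -- as an atom, so that `field_simp` does not reorder `s * r` and lose track of `hu`
  set u := 1 - s + s * r
  field_simp
  ring

theorem derivG_eq (hr : r ≠ 1) (hs : s ≠ 1) (hu : 1 - s + s * r ≠ 0) :
    derivG s r = -(2 * r) / (1 - s + s * r) ^ 2 - 2 * r / (r - 1) ^ 2 *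
      (-(r - 1) / (1 - s + s * r) / (1 - s) + log (r / (1 - s + s * r)) / (1 - s) ^ 2) := by
  have hr' : r - 1 ≠ 0 := sub_ne_zero.2 hr
  have hs' : 1 - s ≠ 0 := sub_ne_zero.2 (Ne.symm hs)
  rw [derivG]
  set u := 1 - s + s * r
  field_simp
  ring

theorem one_sub_add_mul_pos (hr : 1 < r) (hs : s ∈ Ioo 0 1) : 0 < 1 - s + s * r := by
  nlinarith [hs.1, hs.2]

theorem hasDerivAt_one_sub_add_mul : HasDerivAt (fun t => 1 - t + t * r) (r - 1) s := by
  refine (((hasDerivAt_const s 1).fun_sub (hasDerivAt_id' s)).fun_add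
    ((hasDerivAt_id' s).mul_const r)).congr_deriv ?_
  ring

theorem hasDerivAt_log_div (hr : 0 < r) (hu : 0 < 1 - s + s * r) :
    HasDerivAt (fun t => log (r / (1 - t + t * r))) (-(r - 1) / (1 - s + s * r)) s := by
  refine (((hasDerivAt_const s r).fun_div hasDerivAt_one_sub_add_mul hu.ne').log
    (div_pos hr hu).ne').congr_deriv ?_
  set u := 1 - s + s * r
  field_simp
  ring

theorem hasDerivAt_G (hr : 1 < r) (hs : s ∈ Ioo 0 1) :
    HasDerivAt (fun t => G t r) (derivG s r) s := by
  have hu := one_sub_add_mul_pos hr hs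
  have hG := ((hasDerivAt_const s (2 * r / (r - 1))).fun_div hasDerivAt_one_sub_add_mul
    hu.ne').fun_sub (((hasDerivAt_log_div (by linarith) hu).div_const_sub hs.2.ne).const_mul
      (2 * r / (r - 1) ^ 2))
  refine (hG.congr_deriv ?_).congr_of_eventuallyEq ?_
  · rw [derivG_eq hr.ne' hs.2.ne hu.ne']
    have hr' : r - 1 ≠ 0 := sub_ne_zero.2 hr.ne'
    have hs' : 1 - s ≠ 0 := sub_ne_zero.2 hs.2.ne'
    set u := 1 - s + s * r
    field_simp
    ring
  · filter_upwards [isOpen_Ioo.mem_nhds hs] with t ht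
    exact G_eq hr.ne' ht.2.ne (one_sub_add_mul_pos hr ht).ne'

theorem hasDerivAt_derivG (hr : 1 < r) (hs : s ∈ Ioo 0 1) :
    HasDerivAt (fun t => derivG t r) (deriv2G s r) s := by
  have hu := one_sub_add_mul_pos hr hs
  have hr' : r - 1 ≠ 0 := sub_ne_zero.2 hr.ne'
  have hL' : HasDerivAt (fun t => -(r - 1) / (1 - t + t * r))
      ((r - 1) ^ 2 / (1 - s + s * r) ^ 2) s := by
    refine ((hasDerivAt_const s (-(r - 1))).fun_div hasDerivAt_one_sub_add_mul
      hu.ne').congr_deriv ?_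
    ring
  have hD := ((hasDerivAt_const s (-(2 * r))).fun_div (hasDerivAt_one_sub_add_mul.fun_pow 2)
    (pow_ne_zero 2 hu.ne')).fun_sub
    (((hasDerivAt_log_div (by linarith) hu).deriv_div_const_sub hL' hs.2.ne).const_mul
      (2 * r / (r - 1) ^ 2))
  refine (hD.congr_deriv ?_).congr_of_eventuallyEq ?_
  · have hs' : 1 - s ≠ 0 := sub_ne_zero.2 hs.2.ne'
    rw [deriv2G]
    set u := 1 - s + s * r
    field_simp
    ring
  · filter_upwards [isOpen_Ioo.mem_nhds hs] with t ht
    exact derivG_eq hr.ne' ht.2.ne (one_sub_add_mul_pos hr ht).ne'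

end Derivatives

section Bounds

variable {α r q : ℝ}

theorem one_sub_add_mul_mem (hr : r ∈ Icc (2.445 : ℝ) 2.449)
    (hq : q ∈ Icc (0.093 : ℝ) 0.094) :
    1 - q + q * r ∈ Icc (1.1343 : ℝ) 1.1363 := by
  obtain ⟨hr1, hr2⟩ := hr
  obtain ⟨hq1, hq2⟩ := hq
  constructor
  · nlinarith [mul_nonneg (sub_nonneg.2 hq1) (sub_nonneg.2 hr1)]
  · nlinarith [mul_nonneg (sub_nonneg.2 hq2) (sub_nonneg.2 hr2)]

theorem log_div_mem (hr : r ∈ Icc (2.445 : ℝ) 2.449) (hq : q ∈ Icc (0.093 : ℝ) 0.094) :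
    log (r / (1 - q + q * r)) ∈ Icc (0 : ℝ) 0.77 := by
  obtain ⟨hu1, hu2⟩ := one_sub_add_mul_mem hr hq
  have hu0 : 0 < 1 - q + q * r := by linarith
  constructor
  · exact log_nonneg ((one_le_div hu0).2 (by linarith [hr.1]))
  · have hexp : (2.449 / 1.1343 : ℝ) ≤ exp 0.77 := by
      refine le_trans ?_ (sum_le_exp_of_nonneg (by norm_num) 7)
      norm_num [Finset.sum_range_succ, Nat.factorial]
    rw [log_le_iff_le_exp (div_pos (by linarith [hr.1]) hu0)]
    exact le_trans (div_le_div₀ (by norm_num) hr.2 (by norm_num) hu1) hexp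

theorem le_G (hr : r ∈ Icc (2.445 : ℝ) 2.449) (hq : q ∈ Icc (0.093 : ℝ) 0.094) :
    0.95 ≤ G q r := by
  obtain ⟨hr1, hr2⟩ := hr
  obtain ⟨hq1, hq2⟩ := hq
  obtain ⟨hu1, hu2⟩ := one_sub_add_mul_mem ⟨hr1, hr2⟩ ⟨hq1, hq2⟩
  obtain ⟨hL0, hL1⟩ := log_div_mem ⟨hr1, hr2⟩ ⟨hq1, hq2⟩
  have hu0 : 0 < 1 - q + q * r := by linarith
  have h1 : 2 * 2.445 / (2.449 - 1) / 1.1363 ≤ 2 * r / (r - 1) / (1 - q + q * r) := by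
    bound
  have h2 : 2 * r / (r - 1) ^ 2 * (log (r / (1 - q + q * r)) / (1 - q)) ≤
      2 * 2.449 / (2.445 - 1) ^ 2 * (0.77 / (1 - 0.094)) := by
    bound
  rw [G_eq (by linarith : (1 : ℝ) < r).ne' (by linarith : q < 1).ne hu0.ne']
  linarith

theorem le_derivG (hr : r ∈ Icc (2.445 : ℝ) 2.449) (hq : q ∈ Icc (0.093 : ℝ) 0.094) :
    -2.75 ≤ derivG q r := by
  obtain ⟨hr1, hr2⟩ := hr
  obtain ⟨hq1, hq2⟩ := hq
  obtain ⟨hu1, hu2⟩ := one_sub_add_mul_mem ⟨hr1, hr2⟩ ⟨hq1, hq2⟩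
  obtain ⟨hL0, hL1⟩ := log_div_mem ⟨hr1, hr2⟩ ⟨hq1, hq2⟩
  have h1 : 2 * r / (1 - q + q * r) ^ 2 ≤ 2 * 2.449 / 1.1343 ^ 2 := by bound
  have h2 : 2 * 2.445 / ((2.449 - 1) * 1.1363 * (1 - 0.093)) ≤
      2 * r / ((r - 1) * (1 - q + q * r) * (1 - q)) := by bound
  have h3 : 2 * r * log (r / (1 - q + q * r)) / ((r - 1) ^ 2 * (1 - q) ^ 2) ≤
      2 * 2.449 * 0.77 / ((2.445 - 1) ^ 2 * (1 - 0.094) ^ 2) := by bound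
  rw [derivG, neg_div]
  linarith

theorem le_deriv2G (hr : r ∈ Icc (2.445 : ℝ) 2.449) (hq : q ∈ Icc (0.093 : ℝ) 0.094) :
    7.75 ≤ deriv2G q r := by
  obtain ⟨hr1, hr2⟩ := hr
  obtain ⟨hq1, hq2⟩ := hq
  obtain ⟨hu1, hu2⟩ := one_sub_add_mul_mem ⟨hr1, hr2⟩ ⟨hq1, hq2⟩
  obtain ⟨hL0, hL1⟩ := log_div_mem ⟨hr1, hr2⟩ ⟨hq1, hq2⟩
  have h1 : 4 * 2.445 * (2.445 - 1) / 1.1363 ^ 3 ≤ 4 * r * (r - 1) / (1 - q + q * r) ^ 3 := by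
    bound
  have h2 : 2 * r / ((1 - q + q * r) ^ 2 * (1 - q)) ≤ 2 * 2.449 / (1.1343 ^ 2 * (1 - 0.094)) := by
    bound
  have h3 : 4 * 2.445 / ((2.449 - 1) * 1.1363 * (1 - 0.093) ^ 2) ≤
      4 * r / ((r - 1) * (1 - q + q * r) * (1 - q) ^ 2) := by bound
  have h4 : 4 * r * log (r / (1 - q + q * r)) / ((r - 1) ^ 2 * (1 - q) ^ 3) ≤
      4 * 2.449 * 0.77 / ((2.445 - 1) ^ 2 * (1 - 0.094) ^ 3) := by bound
  rw [deriv2G]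
  linarith

theorem seven_tenths_lt_deriv2_formula {A B C : ℝ} (hα : α ∈ Icc (0.8 : ℝ) 0.81)
    (hq : q ∈ Icc (0.093 : ℝ) 0.094) (hA : 7.75 ≤ A) (hB : -2.75 ≤ B) (hC : 0.95 ≤ C) :
    0.7 < (1 - α) * A / (2 - q) + 2 * ((1 - α) * B) / (2 - q) ^ 2
      + 2 * (α + (1 - α) * C) / (2 - q) ^ 3 := by
  obtain ⟨hα1, hα2⟩ := hα
  obtain ⟨hq1, hq2⟩ := hq
  have hA' : 0.19 * 7.75 / (2 - 0.093) ≤ (1 - α) * A / (2 - q) := by bound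
  have hB' : -(2 * (0.2 * 2.75) / (2 - 0.094) ^ 2) ≤ 2 * ((1 - α) * -2.75) / (2 - q) ^ 2 := by
    rw [mul_neg, mul_neg, neg_div, neg_le_neg_iff]
    bound
  have hB'' : 2 * ((1 - α) * -2.75) / (2 - q) ^ 2 ≤ 2 * ((1 - α) * B) / (2 - q) ^ 2 := by bound
  have hC' : 2 * (0.8 + 0.19 * 0.95) / (2 - 0.093) ^ 3 ≤
      2 * (α + (1 - α) * C) / (2 - q) ^ 3 := by bound
  linarith

end Bounds

/-- the reciprocal approximation ratio
`h_{α,r}(q̄) = (α + (1-α)·G(q̄,r)) / (2-q̄)` has second derivative `> 0.7` for all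
`α ∈ [0.8, 0.81]`, `r ∈ [2.445, 2.449]`, `q̄ ∈ [0.093, 0.094]`; in particular it is
strictly convex on `[0.093, 0.094]`. -/
theorem stmt15 (α r : ℝ) (hα : α ∈ Set.Icc (0.8 : ℝ) 0.81)
    (hr : r ∈ Set.Icc (2.445 : ℝ) 2.449) :
    (∀ q ∈ Set.Icc (0.093 : ℝ) 0.094,
      0.7 < deriv (deriv (fun s : ℝ => (α + (1 - α) * G s r) / (2 - s))) q) ∧
    StrictConvexOn ℝ (Set.Icc (0.093 : ℝ) 0.094)
      (fun s : ℝ => (α + (1 - α) * G s r) / (2 - s)) := by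
  have hr1 : 1 < r := by linarith [hr.1]
  have hN : ∀ s ∈ Ioo (0 : ℝ) 1,
      HasDerivAt (fun t => α + (1 - α) * G t r) ((1 - α) * derivG s r) s :=
    fun s hs => ((hasDerivAt_G hr1 hs).const_mul (1 - α)).const_add α
  have hN' : ∀ s ∈ Ioo (0 : ℝ) 1,
      HasDerivAt (fun t => (1 - α) * derivG t r) ((1 - α) * deriv2G s r) s :=
    fun s hs => (hasDerivAt_derivG hr1 hs).const_mul (1 - α)
  have hIcc : Icc (0.093 : ℝ) 0.094 ⊆ Ioo 0 1 := Icc_subset_Ioo (by norm_num) (by norm_num)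
  have hpos : ∀ q ∈ Icc (0.093 : ℝ) 0.094,
      0.7 < deriv (deriv fun s => (α + (1 - α) * G s r) / (2 - s)) q := fun q hq => by
    rw [deriv_deriv_div_const_sub isOpen_Ioo (by norm_num) hN hN' (hIcc hq)]
    exact seven_tenths_lt_deriv2_formula hα hq (le_deriv2G hr hq) (le_derivG hr hq)
      (le_G hr hq)
  refine ⟨hpos, strictConvexOn_of_deriv2_pos (convex_Icc _ _) ?_ fun q hq => ?_⟩
  · exact fun q hq =>
      ((hN q (hIcc hq)).div_const_sub (by linarith [hq.2])).continuousAt.continuousWithinAt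
  · rw [interior_Icc] at hq
    exact lt_trans (by norm_num) (hpos q (Ioo_subset_Icc_self hq))
end
end

section
/- Define G(q̄, r) := (2r / ((1−q̄)(r−1))) · ( (1−q̄)/(1−q̄+q̄r) + ln( r/(1−q̄+q̄r) ) / (1−r) ). For every q̄ ∈ [0, 0.09310569], G(q̄, 2.446946) > 1. (Thus for every triangle distribution T_{q̄} with q̄ ≤ 0.09310569, the 2.446946-markup mechanism strictly outperforms the second-price auction, whose revenue on T_{q̄} is 1.) -/
open MeasureTheory Set

noncomputable section

/-! With `D = 1 - q + q r`, `G q r - 1` is `markupSurplus r q / ((1 - q)(r - 1))`.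
Since `log x ≤ x - 1`, the surplus is antitone in `q` on `[0, p]` as soon as
`(r - 1) D_p² + 2 r D_p ≤ 2 r²`, which holds for `r = 2.446946`, `p = 0.09310569`;
so it suffices that the surplus is positive at `q = p`. There the margin is only about
`2·10⁻⁸`: split `log (r / D_p) = log 2 + log (1 - x)⁻¹` with `x ≈ 0.0725` and bound the
second term by eight terms of its Taylor series. -/

open Real

def markupSurplus (r q : ℝ) : ℝ :=
  2 * r * (1 - q) / (1 - q + q * r) - 2 * r / (r - 1) * log (r / (1 - q + q * r))
    - (1 - q) * (r - 1)

theorem G_sub_one {q r : ℝ} (hq : q ≠ 1) (hr : r ≠ 1) :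
    G q r - 1 = markupSurplus r q / ((1 - q) * (r - 1)) := by
  have hq' : 1 - q ≠ 0 := sub_ne_zero.2 hq.symm
  have hr' : r - 1 ≠ 0 := sub_ne_zero.2 hr
  unfold G markupSurplus
  field_simp
  ring

theorem one_lt_G_of_markupSurplus_pos {q r : ℝ} (hq : q < 1) (hr : 1 < r)
    (h : 0 < markupSurplus r q) : 1 < G q r := by
  have hG : 0 < G q r - 1 :=
    G_sub_one hq.ne hr.ne' ▸ div_pos h (mul_pos (by linarith) (by linarith))
  linarith

theorem log_inv_one_sub_le_sum_range {x : ℝ} (hx0 : 0 ≤ x) (hx1 : x < 1) (n : ℕ) :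
    log (1 - x)⁻¹ ≤ ∑ i ∈ Finset.range n, x ^ (i + 1) / (i + 1) + x ^ (n + 1) / (1 - x) := by
  have h := abs_log_sub_add_sum_range_le (show |x| < 1 by rwa [abs_of_nonneg hx0]) n
  rw [abs_of_nonneg hx0] at h
  rw [log_inv]
  linarith [(abs_le.1 h).1]

theorem markupSurplus_antitoneOn {r p : ℝ} (hr : 1 < r)
    (hp : (r - 1) * (1 - p + p * r) ^ 2 + 2 * r * (1 - p + p * r) ≤ 2 * r ^ 2) :
    AntitoneOn (markupSurplus r) (Set.Icc 0 p) := by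
  rintro q ⟨hq0, -⟩ q' ⟨-, hq'p⟩ hqq'
  set D := 1 - q + q * r with hD
  set D' := 1 - q' + q' * r with hD'
  have hr1 : 0 < r - 1 := by linarith
  have hD0 : 0 < D := by nlinarith
  have hDD' : D ≤ D' := by nlinarith
  have hD'p : D' ≤ 1 - p + p * r := by nlinarith
  have hD'0 : 0 < D' := by linarith
  have hlog : log (r / D) - log (r / D') ≤ (r - 1) * (q' - q) / D := by
    rw [← log_div (by positivity) (by positivity), div_div_div_cancel_left' _ _ (by positivity)]
    calc log (D' / D) ≤ D' / D - 1 := log_le_sub_one_of_pos (by positivity)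
      _ = (r - 1) * (q' - q) / D := by field_simp; ring
  have hfrac : (1 - q) / D - (1 - q') / D' = r * (q' - q) / (D * D') := by
    field_simp
    rw [hD, hD']
    ring
  have hK : 0 ≤ 2 * r ^ 2 - 2 * r * D' - (r - 1) * D * D' := by
    have hDD'_le : D * D' ≤ (1 - p + p * r) ^ 2 := by
      rw [sq]
      exact mul_le_mul (hDD'.trans hD'p) hD'p hD'0.le (by linarith)
    nlinarith [mul_le_mul_of_nonneg_left hDD'_le hr1.le]
  calc markupSurplus r q'
      = markupSurplus r q + 2 * r / (r - 1) * (log (r / D) - log (r / D'))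
          - 2 * r * ((1 - q) / D - (1 - q') / D') + (r - 1) * (q' - q) := by
        unfold markupSurplus; ring
    _ ≤ markupSurplus r q + 2 * r / (r - 1) * ((r - 1) * (q' - q) / D)
          - 2 * r * (r * (q' - q) / (D * D')) + (r - 1) * (q' - q) := by
        rw [hfrac]; gcongr
    _ = markupSurplus r q
          - (q' - q) * (2 * r ^ 2 - 2 * r * D' - (r - 1) * D * D') / (D * D') := by
        field_simp; ring
    _ ≤ markupSurplus r q :=
        sub_le_self _ (div_nonneg (mul_nonneg (sub_nonneg.2 hqq') hK) (by positivity))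

theorem markupSurplus_threshold_pos : 0 < markupSurplus 2.446946 0.09310569 := by
  set x : ℝ := 1 - 2 * (1 - 0.09310569 + 0.09310569 * 2.446946) / 2.446946 with hx
  have hx0 : 0 ≤ x := by norm_num [hx]
  have hx1 : x < 1 := by norm_num [hx]
  have hlog : log (2.446946 / (1 - 0.09310569 + 0.09310569 * 2.446946)) =
      log 2 + log (1 - x)⁻¹ := by
    rw [← log_mul (by norm_num) (by norm_num [hx])]
    norm_num [hx]
  have hbound := log_inv_one_sub_le_sum_range hx0 hx1 8
  unfold markupSurplus
  rw [hlog]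
  norm_num [Finset.sum_range_succ, hx] at hbound ⊢
  linarith [log_two_lt_d9]

/-- for every `q̄ ∈ [0, 0.09310569]`, `G(q̄, 2.446946) > 1`: the
`2.446946`-markup mechanism strictly outperforms the second-price auction
(whose revenue on `T_q̄` is `1`). -/
theorem stmt18 (q : ℝ) (hq : q ∈ Set.Icc (0 : ℝ) 0.09310569) :
    1 < G q 2.446946 := by
  obtain ⟨hq0, hq1⟩ := hq
  refine one_lt_G_of_markupSurplus_pos (by linarith) (by norm_num) ?_
  calc 0 < markupSurplus 2.446946 0.09310569 := markupSurplus_threshold_pos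
    _ ≤ markupSurplus 2.446946 q :=
      markupSurplus_antitoneOn (by norm_num) (by norm_num) ⟨hq0, hq1⟩
        ⟨hq0.trans hq1, le_rfl⟩ hq1
end
end

section
/- Define G(q̄, r) := (2r / ((1−q̄)(r−1))) · ( (1−q̄)/(1−q̄+q̄r) + ln( r/(1−q̄+q̄r) ) / (1−r) ). For every q̄ ∈ [0.09310571, 1) and every r ∈ (1, 11], G(q̄, r) < 1. (Thus for every triangle distribution T_{q̄} with q̄ ≥ 0.09310571, every nontrivial markup mechanism with ratio at most 11 is strictly outperformed by the second-price auction, whose revenue on T_{q̄} is 1.) -/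
/-! With `s = 1 - q + q r` and `x = r / s` one has
`1 - G q r = (s / ((1 - q)(r - 1)))² · markupGap q x`, where
`markupGap q x = 2x(1 - qx) log x - (x - 1)(x + 1 - 2qx²)`. As `log x ≤ x - 1`, this is
nondecreasing in `q`, so it suffices to treat `q₀ = 0.09310571` and
`1 < x ≤ 11 / (1 + 10 q₀)`, the range of `r / s`.
Bounding `log` below by its Padé approximant (directly on `(1, 2]`, after splitting off `log 2`
beyond `2`) turns this into polynomial inequalities. The constant `q₀` is nearly sharp:
`markupGap q₀` almost vanishes near `x ≈ 2.1564`. -/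

open MeasureTheory Set

noncomputable section

open Real

/-- The [3/3] Padé approximant of `log` at `1`. -/
def logPade (t : ℝ) : ℝ :=
  (t - 1) * (11 * t ^ 2 + 38 * t + 11) / (3 * (t + 1) * (t ^ 2 + 8 * t + 1))

lemma hasDerivAt_log_sub_logPade {t : ℝ} (ht : 0 < t) :
    HasDerivAt (fun y => log y - logPade y)
      (9 * (t - 1) ^ 6 / (t * (3 * (t + 1) * (t ^ 2 + 8 * t + 1)) ^ 2)) t := by
  have hnum : HasDerivAt (fun y : ℝ => (y - 1) * (11 * y ^ 2 + 38 * y + 11))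
      (33 * t ^ 2 + 54 * t - 27) t := by
    refine (((hasDerivAt_id' t).sub_const 1).fun_mul ((((hasDerivAt_pow 2 t).const_mul 11).fun_add
      ((hasDerivAt_id' t).const_mul 38)).add_const 11)).congr_deriv ?_
    simp only [Nat.cast_ofNat, Nat.add_one_sub_one, pow_one]
    ring
  have hden : HasDerivAt (fun y : ℝ => 3 * (y + 1) * (y ^ 2 + 8 * y + 1))
      (9 * t ^ 2 + 54 * t + 27) t := by
    refine ((((hasDerivAt_id' t).add_const 1).const_mul 3).fun_mul (((hasDerivAt_pow 2 t).fun_add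
      ((hasDerivAt_id' t).const_mul 8)).add_const 1)).congr_deriv ?_
    simp only [Nat.cast_ofNat, Nat.add_one_sub_one, pow_one]
    ring
  have hden0 : 3 * (t + 1) * (t ^ 2 + 8 * t + 1) ≠ 0 := by positivity
  refine ((hasDerivAt_log ht.ne').fun_sub (hnum.fun_div hden hden0)).congr_deriv ?_
  field_simp
  ring

lemma logPade_lt_log {t : ℝ} (ht : 1 < t) : logPade t < log t := by
  have hmono : StrictMonoOn (fun y => log y - logPade y) (Ici 1) := by
    refine strictMonoOn_of_deriv_pos (convex_Ici 1) (fun y hy => ?_) (fun y hy => ?_)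
    · exact (hasDerivAt_log_sub_logPade (zero_lt_one.trans_le hy)).continuousAt.continuousWithinAt
    · rw [interior_Ici] at hy
      have hy₀ : 0 < y := zero_lt_one.trans hy
      have hy₁ : 0 < y - 1 := sub_pos.2 hy
      rw [(hasDerivAt_log_sub_logPade hy₀).deriv]
      positivity
  simpa [logPade] using hmono self_mem_Ici ht.le ht

def markupGap (q x : ℝ) : ℝ := 2 * x * (1 - q * x) * log x - (x - 1) * (x + 1 - 2 * q * x ^ 2)

lemma one_sub_G_eq {q r : ℝ} (hq : q ≠ 1) (hr : r ≠ 1) (hs : 1 - q + q * r ≠ 0) :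
    1 - G q r = ((1 - q + q * r) / ((1 - q) * (r - 1))) ^ 2 *
      markupGap q (r / (1 - q + q * r)) := by
  have h1q : 1 - q ≠ 0 := sub_ne_zero.2 hq.symm
  have hr1 : r - 1 ≠ 0 := sub_ne_zero.2 hr
  have h1r : 1 - r ≠ 0 := sub_ne_zero.2 hr.symm
  unfold G markupGap
  generalize log (r / (1 - q + q * r)) = l
  set s := 1 - q + q * r with hs_def
  field_simp
  rw [hs_def]
  ring

lemma markupGap_le_markupGap {q₀ q x : ℝ} (hq : q₀ ≤ q) (hx : 0 < x) :
    markupGap q₀ x ≤ markupGap q x := by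
  have hlog : log x ≤ x - 1 := log_le_sub_one_of_pos hx
  have hdiff : markupGap q x - markupGap q₀ x = 2 * (q - q₀) * x ^ 2 * (x - 1 - log x) := by
    unfold markupGap; ring
  have hnonneg : 0 ≤ 2 * (q - q₀) * x ^ 2 * (x - 1 - log x) :=
    mul_nonneg (mul_nonneg (by linarith) (sq_nonneg x)) (sub_nonneg.2 hlog)
  linarith

lemma markupGap_pos_of_le_two {x : ℝ} (h1 : 1 < x) (h2 : x ≤ 2) :
    0 < markupGap 0.09310571 x := by
  have hx : 0 < x := by linarith
  have hw : 0 < 2 * x * (1 - 0.09310571 * x) := by nlinarith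
  -- The numerator of `hpade` below is `(x - 1) ^ 2` times this quartic.
  have hQ : 0 ≤ 3 + 11 * x - 59439429 / 6250000 * x ^ 2 + 26900849 / 50000000 * x ^ 3
      + 27931713 / 50000000 * x ^ 4 := by
    nlinarith [mul_nonneg (sub_nonneg.2 h1.le) (sub_nonneg.2 h2), sq_nonneg (x - 2),
      sq_nonneg (x - 1), mul_nonneg (mul_nonneg (sub_nonneg.2 h1.le) (sub_nonneg.2 h2)) hx.le]
  have hpade :
      (x - 1) * (x + 1 - 2 * 0.09310571 * x ^ 2) ≤ 2 * x * (1 - 0.09310571 * x) * logPade x := by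
    rw [logPade, mul_div_assoc', le_div_iff₀ (by positivity)]
    nlinarith [mul_nonneg (sq_nonneg (x - 1)) hQ]
  have hlog := mul_lt_mul_of_pos_left (logPade_lt_log h1) hw
  unfold markupGap
  linarith

lemma markupGap_pos_of_two_lt {x : ℝ} (h2 : 2 < x) (hX : x ≤ 11 / (1 + 10 * 0.09310571)) :
    0 < markupGap 0.09310571 x := by
  have hw : 0 < 2 * x * (1 - 0.09310571 * x) := by nlinarith
  have hlog : 0.6931471803 + logPade (x / 2) < log x := by
    have hsplit : log x = log 2 + log (x / 2) := by
      rw [log_div (by positivity) two_ne_zero]; ring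
    rw [hsplit]
    exact add_lt_add log_two_gt_d9 (logPade_lt_log (by linarith))
  have hQ : 0 ≤ 157503274610393618353809418236363 / 30517578125000000000000000000000
      - 5237495135259170081993787793 / 1953125000000000000000000000 * x
      - 148470921667873935028303 / 15625000000000000000000 * x ^ 2
      + 3235277313491331461 / 500000000000000000 * x ^ 3 + 27931713 / 50000000 * x ^ 4 := by
    nlinarith [mul_nonneg (mul_nonneg (sub_nonneg.2 h2.le) (sub_nonneg.2 h2.le))
      (sub_nonneg.2 h2.le), sq_nonneg (x - 2), mul_nonneg (sub_nonneg.2 h2.le) (sub_nonneg.2 hX),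
      sq_nonneg x,
      mul_nonneg (mul_nonneg (sub_nonneg.2 h2.le) (sub_nonneg.2 h2.le)) (sub_nonneg.2 hX)]
  -- The numerator almost has a double root at `134777 / 62500 ≈ 2.1564`: it is the quartic above
  -- times `(x - 134777 / 62500) ^ 2`, plus a linear term that is positive for `x > 0`.
  have hnum : 0 < 2 * x * (1 - 0.09310571 * x) *
        (0.6931471803 * (3 * (x + 2) * (x ^ 2 + 16 * x + 4)) + (x - 2) * (11 * x ^ 2 + 76 * x + 44))
      - (x - 1) * (x + 1 - 2 * 0.09310571 * x ^ 2) * (3 * (x + 2) * (x ^ 2 + 16 * x + 4)) := by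
    nlinarith [mul_nonneg hQ (sq_nonneg (x - 134777 / 62500))]
  have hpade : 2 * x * (1 - 0.09310571 * x) * (0.6931471803 + logPade (x / 2))
      - (x - 1) * (x + 1 - 2 * 0.09310571 * x ^ 2) = (2 * x * (1 - 0.09310571 * x) *
        (0.6931471803 * (3 * (x + 2) * (x ^ 2 + 16 * x + 4)) + (x - 2) * (11 * x ^ 2 + 76 * x + 44))
      - (x - 1) * (x + 1 - 2 * 0.09310571 * x ^ 2) * (3 * (x + 2) * (x ^ 2 + 16 * x + 4)))
        / (3 * (x + 2) * (x ^ 2 + 16 * x + 4)) := by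
    unfold logPade
    field_simp
    ring
  have hden : 0 < 3 * (x + 2) * (x ^ 2 + 16 * x + 4) := by positivity
  have hquot := div_pos hnum hden
  have hlog' := mul_lt_mul_of_pos_left hlog hw
  unfold markupGap
  linarith

lemma markupGap_pos {x : ℝ} (h1 : 1 < x) (hX : x ≤ 11 / (1 + 10 * 0.09310571)) :
    0 < markupGap 0.09310571 x := by
  rcases le_or_gt x 2 with h2 | h2
  · exact markupGap_pos_of_le_two h1 h2
  · exact markupGap_pos_of_two_lt h2 hX

/-- for every `q̄ ∈ [0.09310571, 1)` and every `r ∈ (1, 11]`,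
`G(q̄, r) < 1`: every nontrivial markup mechanism with ratio at most `11` is
strictly outperformed by the second-price auction on `T_q̄`. -/
theorem stmt19 (q r : ℝ) (hq : q ∈ Set.Ico (0.09310571 : ℝ) 1)
    (hr : r ∈ Set.Ioc (1 : ℝ) 11) :
    G q r < 1 := by
  obtain ⟨hq₀, hq₁⟩ := hq
  obtain ⟨hr₁, hr₁₁⟩ := hr
  have hs : 0 < 1 - q + q * r := by nlinarith
  have hx₁ : 1 < r / (1 - q + q * r) := by
    rw [one_lt_div hs]; nlinarith
  have hxX : r / (1 - q + q * r) ≤ 11 / (1 + 10 * 0.09310571) := by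
    rw [div_le_div_iff₀ hs (by norm_num)]; nlinarith
  have hgap : 0 < markupGap q (r / (1 - q + q * r)) :=
    (markupGap_pos hx₁ hxX).trans_le (markupGap_le_markupGap hq₀ (by linarith))
  have hfactor : 0 < ((1 - q + q * r) / ((1 - q) * (r - 1))) ^ 2 :=
    pow_pos (div_pos hs (mul_pos (by linarith) (by linarith))) 2
  linarith [one_sub_G_eq hq₁.ne hr₁.ne' hs.ne', mul_pos hfactor hgap]
end
end
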